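/- arXiv:1810.12289 — 2 statements merged into one kernel-verified Lean document; each statement's English description precedes it below -/
import Mathlib

section
/- Let D = (0,1)² ⊆ ℝ² and for n ∈ ℕ let u_n(x₁,x₂) = 1 if x₁+x₂ < 1/n and 0 otherwise, and A_n = {(x₁,x₂) ∈ (0,1)² : x₁+x₂ < 1/n}. Then there is an absolute constant c > 0 such that for all n ≥ 2: E^cen(u_n) = 2 ∫_{A_n} ∫_{D∖A_n} |x−y|^{−2} dy dx ≥ c · (log n)/n². Consequently, combined with the bound ∫_D ∫_{B(x,δ_D(x)/2)} (u_n(y)−u_n(x))² |x−y|^{−2} dy dx ≤ C/n², the ratio of the restricted form to E^cen(u_n) tends to 0 as n → ∞, so no constant c₁ can satisfy E^cen(u) ≤ c₁ ∫_D ∫_{B(x,δ_D(x)/2)} (u(y)−u(x))² |x−y|^{−2} dy dx for all u ∈ L²(D). -/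
open MeasureTheory Metric Set ENNReal Filter

noncomputable section

abbrev Euc (d : ℕ) := EuclideanSpace ℝ (Fin d)

/-- The visible region of `x` in `D`. -/
def visible {d : ℕ} (D : Set (Euc d)) (x : Euc d) : Set (Euc d) :=
  {y ∈ D | ∀ t : ℝ, t ∈ Set.Ioo (0:ℝ) 1 → t • x + (1 - t) • y ∈ D}

/-- Censored nonlocal quadratic form. -/
def Ecen {d : ℕ} (D : Set (Euc d)) (k : Euc d → Euc d → ℝ) (u : Euc d → ℝ) : ℝ≥0∞ :=
  ∫⁻ x in D, ∫⁻ y in D, ENNReal.ofReal ((u y - u x) ^ 2 * k x y)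

/-- The open unit square `D = (0,1)² ⊆ ℝ²`. -/
def unitSq : Set (Euc 2) := {x | x 0 ∈ Set.Ioo (0:ℝ) 1 ∧ x 1 ∈ Set.Ioo (0:ℝ) 1}

/-- `u_n(x₁, x₂) = 1` if `x₁ + x₂ < 1/n` and `0` otherwise. -/
def uSeq (n : ℕ) : Euc 2 → ℝ := fun x => if x 0 + x 1 < 1 / n then 1 else 0

/-- `A_n = {(x₁,x₂) ∈ (0,1)² : x₁ + x₂ < 1/n}`. -/
def ASeq (n : ℕ) : Set (Euc 2) := {x ∈ unitSq | x 0 + x 1 < 1 / n}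

/-- The weakly singular kernel `k(x,y) = |x-y|⁻²` on `ℝ²`. -/
def kWeak : Euc 2 → Euc 2 → ℝ := fun x y => (‖x - y‖ ^ 2)⁻¹

/-!
For an indicator `1_S` the censored form is twice the interaction energy between `D ∩ S` and
`D \ S`. Every point `x` of the corner square `(0, 1/(4n))²` sees the wedge
`{y | 1/n < y₀ - x₀ < 3/4, 0 < y₁ - x₁ < y₀ - x₀}` of `D`, on which `u_n = 0` and
`|x - y|² ≤ 2 (y₀ - x₀)²`; integrating over the wedge, whose vertical sections have length
`y₀ - x₀`, gives `∫ ds / (2s) = log (3n/4) / 2`. Hence `E^cen(u_n) ≳ n⁻² log n`.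

The same lower bound holds for the ramp `v_n = clamp (2 - 2n (x₀ + x₁))`, which is
`4n`-Lipschitz. On `B(x, δ_D(x)/2)` its squared difference quotient is at most `16 n²`, and
it is constant there unless `x ∈ (0, 1/n)²`, because `δ_D(x) ≤ min (x₀, x₁)`. So the restricted
form of `v_n` is `O(n⁻²)`, and the ratio of the two forms grows like `log n`.
-/

def planeEquivProd : Euc 2 ≃ᵐ ℝ × ℝ :=
  (MeasurableEquiv.toLp 2 (Fin 2 → ℝ)).symm.trans MeasurableEquiv.finTwoArrow

lemma measurePreserving_planeEquivProd : MeasurePreserving planeEquivProd :=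
  (EuclideanSpace.volume_preserving_symm_measurableEquiv_toLp (Fin 2)).trans
    (volume_preserving_finTwoArrow ℝ)

@[simp]
lemma planeEquivProd_apply (x : Euc 2) : planeEquivProd x = (x 0, x 1) := by
  simp [planeEquivProd, MeasurableEquiv.finTwoArrow]

def coordBox (a b c d : ℝ) : Set (Euc 2) := planeEquivProd ⁻¹' (Ioo a b ×ˢ Ioo c d)

@[simp]
lemma mem_coordBox {a b c d : ℝ} {x : Euc 2} :
    x ∈ coordBox a b c d ↔ x 0 ∈ Ioo a b ∧ x 1 ∈ Ioo c d := by
  simp [coordBox]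

lemma measurableSet_coordBox (a b c d : ℝ) : MeasurableSet (coordBox a b c d) :=
  planeEquivProd.measurable (measurableSet_Ioo.prod measurableSet_Ioo)

lemma volume_coordBox (a b c d : ℝ) :
    volume (coordBox a b c d) = ENNReal.ofReal (b - a) * ENNReal.ofReal (d - c) := by
  rw [coordBox, measurePreserving_planeEquivProd.measure_preimage
    (measurableSet_Ioo.prod measurableSet_Ioo).nullMeasurableSet, Measure.volume_eq_prod,
    Measure.prod_prod, Real.volume_Ioo, Real.volume_Ioo]

lemma unitSq_eq_coordBox : unitSq = coordBox 0 1 0 1 := by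
  ext x; simp [unitSq]

lemma measurableSet_unitSq : MeasurableSet unitSq :=
  unitSq_eq_coordBox ▸ measurableSet_coordBox 0 1 0 1

lemma volume_unitSq : volume unitSq = 1 := by
  simp [unitSq_eq_coordBox, volume_coordBox]

theorem Ecen_indicator_one {d : ℕ} {D S : Set (Euc d)} (hD : MeasurableSet D)
    (hS : MeasurableSet S) {k : Euc d → Euc d → ℝ} (hk : Measurable (Function.uncurry k))
    (hk_symm : ∀ x y, k x y = k y x) :
    Ecen D k (S.indicator 1)
      = 2 * ∫⁻ x in D ∩ S, ∫⁻ y in D \ S, ENNReal.ofReal (k x y) := by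
  set g := fun x => ∫⁻ y in D, ENNReal.ofReal ((S.indicator 1 y - S.indicator 1 x) ^ 2 * k x y)
  have g_of_mem : EqOn g (fun x => ∫⁻ y in D \ S, ENNReal.ofReal (k x y)) (D ∩ S) := by
    intro x hx
    simp only [g, sdiff_eq_compl_inter, ← setLIntegral_indicator hS.compl]
    refine lintegral_congr fun y => ?_
    by_cases hy : y ∈ S <;> simp [hx.2, hy]
  have g_of_notMem : EqOn g (fun x => ∫⁻ y in D ∩ S, ENNReal.ofReal (k x y)) (D \ S) := by
    intro x hx
    simp only [g, inter_comm D, ← setLIntegral_indicator hS]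
    refine lintegral_congr fun y => ?_
    by_cases hy : y ∈ S <;> simp [hx.2, hy]
  have swap : ∫⁻ x in D \ S, ∫⁻ y in D ∩ S, ENNReal.ofReal (k x y)
      = ∫⁻ x in D ∩ S, ∫⁻ y in D \ S, ENNReal.ofReal (k x y) := by
    rw [lintegral_lintegral_swap hk.ennreal_ofReal.aemeasurable]
    simp only [hk_symm]
  rw [Ecen, ← lintegral_inter_add_sdiff _ D hS, setLIntegral_congr_fun (hD.inter hS) g_of_mem,
    setLIntegral_congr_fun (hD.diff hS) g_of_notMem, swap, two_mul]

lemma measurable_uncurry_kWeak : Measurable (Function.uncurry kWeak) := by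
  unfold kWeak Function.uncurry; fun_prop

lemma uSeq_eq_indicator (n : ℕ) : uSeq n = {x | x 0 + x 1 < 1 / (n : ℝ)}.indicator 1 := by
  ext x; simp [uSeq, indicator_apply]

lemma ASeq_eq_inter (n : ℕ) : ASeq n = unitSq ∩ {x | x 0 + x 1 < 1 / (n : ℝ)} := rfl

lemma Ecen_uSeq (n : ℕ) :
    Ecen unitSq kWeak (uSeq n)
      = 2 * ∫⁻ x in ASeq n, ∫⁻ y in unitSq \ ASeq n, ENNReal.ofReal ((‖x - y‖ ^ 2)⁻¹) := by
  rw [uSeq_eq_indicator, Ecen_indicator_one measurableSet_unitSq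
    (measurableSet_lt (by fun_prop) measurable_const) measurable_uncurry_kWeak
    fun x y => by rw [kWeak, kWeak, norm_sub_rev], ASeq_eq_inter, sdiff_self_inter]
  rfl

theorem setLIntegral_regionBetween {α : Type*} [MeasurableSpace α] {μ : Measure α}
    {f g : α → ℝ} {s : Set α} (hf : Measurable f) (hg : Measurable g) (hs : MeasurableSet s)
    {w : α → ℝ≥0∞} (hw : Measurable w) :
    ∫⁻ p in regionBetween f g s, w p.1 ∂(μ.prod volume)
      = ∫⁻ y in s, w y * ENNReal.ofReal ((g - f) y) ∂μ := by
  rw [← withDensity_apply _ (measurableSet_regionBetween hf hg hs), ← prod_withDensity_left hw,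
    volume_regionBetween_eq_lintegral' hf hg hs,
    setLIntegral_withDensity_eq_setLIntegral_mul _ hw (by fun_prop) hs]
  rfl

lemma setIntegral_Ioo_inv_two_mul {a b : ℝ} (ha : 0 < a) (hab : a ≤ b) :
    ∫ s in Ioo a b, (2 * s)⁻¹ = Real.log (b / a) / 2 := by
  rw [← integral_Ioc_eq_integral_Ioo, ← intervalIntegral.integral_of_le hab]
  simp only [mul_inv, intervalIntegral.integral_const_mul,
    integral_inv_of_pos ha (ha.trans_le hab)]
  ring

lemma le_setLIntegral_inv_sq_regionBetween {a b : ℝ} (ha : 0 < a) (hab : a ≤ b) :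
    ENNReal.ofReal (Real.log (b / a) / 2)
      ≤ ∫⁻ p in regionBetween 0 id (Ioo a b), ENNReal.ofReal ((p.1 ^ 2 + p.2 ^ 2)⁻¹) := by
  have hR := measurableSet_regionBetween measurable_zero measurable_id
    (measurableSet_Ioo (a := a) (b := b))
  have hint : IntegrableOn (fun s : ℝ => (2 * s)⁻¹) (Ioo a b) := by
    refine (ContinuousOn.integrableOn_Icc ?_).mono_set Ioo_subset_Icc_self
    exact ContinuousOn.inv₀ (by fun_prop) fun s hs => by linarith [hs.1]
  calc ENNReal.ofReal (Real.log (b / a) / 2)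
      = ∫⁻ s in Ioo a b, ENNReal.ofReal ((2 * s)⁻¹) := by
        rw [← setIntegral_Ioo_inv_two_mul ha hab, ofReal_integral_eq_lintegral_ofReal hint]
        exact (ae_restrict_iff' measurableSet_Ioo).2 (ae_of_all _ fun s hs =>
          (inv_pos.2 (by linarith [hs.1])).le)
    _ = ∫⁻ s in Ioo a b, ENNReal.ofReal ((2 * s ^ 2)⁻¹) * ENNReal.ofReal s := by
        refine setLIntegral_congr_fun measurableSet_Ioo fun s hs => ?_
        have : 0 < s := ha.trans hs.1
        rw [← ENNReal.ofReal_mul (by positivity)]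
        congr 1
        field_simp
    _ = ∫⁻ p in regionBetween 0 id (Ioo a b), ENNReal.ofReal ((2 * p.1 ^ 2)⁻¹) := by
        have := setLIntegral_regionBetween (μ := volume) measurable_zero measurable_id
          (measurableSet_Ioo (a := a) (b := b)) (w := fun s => ENNReal.ofReal ((2 * s ^ 2)⁻¹))
          (by fun_prop)
        simp only [Pi.sub_apply, id, Pi.zero_apply, sub_zero] at this
        rw [Measure.volume_eq_prod, this]
    _ ≤ ∫⁻ p in regionBetween 0 id (Ioo a b), ENNReal.ofReal ((p.1 ^ 2 + p.2 ^ 2)⁻¹) := by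
        refine setLIntegral_mono' hR fun p ⟨hp1, hp2⟩ => ENNReal.ofReal_le_ofReal ?_
        simp only [Pi.zero_apply, id, mem_Ioo] at hp1 hp2
        exact inv_anti₀ (by nlinarith) (by nlinarith)

def wedge (x : Euc 2) (a b : ℝ) : Set (Euc 2) :=
  {y | y 0 - x 0 ∈ Ioo a b ∧ y 1 - x 1 ∈ Ioo 0 (y 0 - x 0)}

lemma wedge_eq_preimage (x : Euc 2) (a b : ℝ) :
    wedge x a b = (fun y => planeEquivProd (y - x)) ⁻¹' regionBetween 0 id (Ioo a b) := by
  ext y; simp [wedge, regionBetween]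

lemma measurableSet_wedge (x : Euc 2) (a b : ℝ) : MeasurableSet (wedge x a b) := by
  rw [wedge_eq_preimage]
  exact (planeEquivProd.measurable.comp (measurable_sub_const x))
    (measurableSet_regionBetween measurable_zero measurable_id measurableSet_Ioo)

lemma le_setLIntegral_wedge (x : Euc 2) {a b : ℝ} (ha : 0 < a) (hab : a ≤ b) :
    ENNReal.ofReal (Real.log (b / a) / 2)
      ≤ ∫⁻ y in wedge x a b, ENNReal.ofReal ((‖x - y‖ ^ 2)⁻¹) := by
  set e := (MeasurableEquiv.subRight x).trans planeEquivProd
  have he : MeasurePreserving e :=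
    measurePreserving_planeEquivProd.comp (measurePreserving_sub_right volume x)
  have he_apply : ∀ y, e y = (y 0 - x 0, y 1 - x 1) := fun y => rfl
  have hnorm : ∀ y, ‖x - y‖ ^ 2 = (e y).1 ^ 2 + (e y).2 ^ 2 := fun y => by
    simp [he_apply, norm_sub_rev x y, EuclideanSpace.norm_sq_eq, Fin.sum_univ_two]
  simp only [wedge_eq_preimage, hnorm]
  rw [show (fun y => planeEquivProd (y - x)) = e from rfl,
    he.setLIntegral_comp_preimage_emb e.measurableEmbedding
      (fun p => ENNReal.ofReal ((p.1 ^ 2 + p.2 ^ 2)⁻¹))]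
  exact le_setLIntegral_inv_sq_regionBetween ha hab

lemma Ecen_unitSq_ge_of_corner (u : Euc 2 → ℝ) {a t : ℝ} (ha : 0 < a) (ha' : a ≤ 3 / 4)
    (ht : t ≤ 1 / 8) (hu1 : ∀ x ∈ coordBox 0 t 0 t, u x = 1)
    (hu0 : ∀ y ∈ unitSq, a < y 0 + y 1 → u y = 0) :
    volume (coordBox 0 t 0 t) * ENNReal.ofReal (Real.log (3 / 4 / a) / 2)
      ≤ Ecen unitSq kWeak u := by
  have hQ : coordBox 0 t 0 t ⊆ unitSq := fun x hx => by
    obtain ⟨⟨h1, h2⟩, h3, h4⟩ := mem_coordBox.1 hx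
    exact ⟨⟨h1, by linarith⟩, h3, by linarith⟩
  have inner : ∀ x ∈ coordBox 0 t 0 t, ENNReal.ofReal (Real.log (3 / 4 / a) / 2)
      ≤ ∫⁻ y in unitSq, ENNReal.ofReal ((u y - u x) ^ 2 * kWeak x y) := by
    intro x hx
    have hx' := mem_coordBox.1 hx
    have hW : wedge x a (3 / 4) ⊆ unitSq := fun y ⟨⟨h1, h2⟩, h3, h4⟩ =>
      ⟨⟨by linarith [hx'.1.1], by linarith [hx'.1.2]⟩, by linarith [hx'.2.1], by linarith [hx'.2.2]⟩
    calc ENNReal.ofReal (Real.log (3 / 4 / a) / 2)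
        ≤ ∫⁻ y in wedge x a (3 / 4), ENNReal.ofReal ((‖x - y‖ ^ 2)⁻¹) :=
          le_setLIntegral_wedge x ha ha'
      _ = ∫⁻ y in wedge x a (3 / 4), ENNReal.ofReal ((u y - u x) ^ 2 * kWeak x y) := by
          refine setLIntegral_congr_fun (measurableSet_wedge x a _) fun y hy => ?_
          rw [hu0 y (hW hy) (by linarith [hy.1.1, hy.2.1, hx'.1.1, hx'.2.1]), hu1 x hx, kWeak]
          norm_num
      _ ≤ ∫⁻ y in unitSq, ENNReal.ofReal ((u y - u x) ^ 2 * kWeak x y) :=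
          lintegral_mono_set hW
  calc volume (coordBox 0 t 0 t) * ENNReal.ofReal (Real.log (3 / 4 / a) / 2)
      = ∫⁻ _ in coordBox 0 t 0 t, ENNReal.ofReal (Real.log (3 / 4 / a) / 2) := by
        rw [setLIntegral_const, mul_comm]
    _ ≤ ∫⁻ x in coordBox 0 t 0 t, ∫⁻ y in unitSq,
          ENNReal.ofReal ((u y - u x) ^ 2 * kWeak x y) :=
        setLIntegral_mono' (measurableSet_coordBox 0 t 0 t) inner
    _ ≤ Ecen unitSq kWeak u := lintegral_mono_set hQ

lemma Ecen_unitSq_ge_log_div_sq (u : Euc 2 → ℝ) {n : ℕ} (hn : 2 ≤ n)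
    (hu1 : ∀ x ∈ unitSq, x 0 + x 1 < 1 / (2 * n) → u x = 1)
    (hu0 : ∀ y ∈ unitSq, 1 / n ≤ y 0 + y 1 → u y = 0) :
    ENNReal.ofReal (1 / 64 * Real.log n / n ^ 2) ≤ Ecen unitSq kWeak u := by
  have hn' : (2 : ℝ) ≤ n := by exact_mod_cast hn
  refine le_trans ?_ (Ecen_unitSq_ge_of_corner u (a := 1 / n) (t := 1 / (4 * n)) (by positivity)
    (by rw [div_le_div_iff₀ (by positivity) (by norm_num)]; linarith)
    (by rw [div_le_div_iff₀ (by positivity) (by norm_num)]; linarith)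
    (fun x hx => ?_) (fun y hy hy' => hu0 y hy hy'.le))
  · have hlog : Real.log n ≤ 2 * Real.log (3 / 4 / (1 / n)) := by
      have h := Real.log_le_log (by positivity) (show (n : ℝ) ≤ (3 / 4 / (1 / n)) ^ 2 by
        field_simp; nlinarith)
      rwa [Real.log_pow, Nat.cast_ofNat] at h
    rw [volume_coordBox, sub_zero, ← ENNReal.ofReal_mul (by positivity),
      ← ENNReal.ofReal_mul (by positivity)]
    refine ENNReal.ofReal_le_ofReal ?_
    calc 1 / 64 * Real.log n / n ^ 2 ≤ 1 / 64 * (2 * Real.log (3 / 4 / (1 / n))) / n ^ 2 := by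
          gcongr
      _ = 1 / (4 * n) * (1 / (4 * n)) * (Real.log (3 / 4 / (1 / n)) / 2) := by
        field_simp; ring
  · obtain ⟨⟨h0, h0'⟩, h1, h1'⟩ := mem_coordBox.1 hx
    have h4n : 1 / (4 * (n : ℝ)) < 1 := by
      rw [div_lt_one (by positivity)]; linarith
    refine hu1 x ⟨⟨h0, by linarith⟩, h1, by linarith⟩ ?_
    calc x 0 + x 1 < 1 / (4 * n) + 1 / (4 * n) := add_lt_add h0' h1'
      _ = 1 / (2 * n) := by field_simp; norm_num

lemma abs_coordSum_sub_le (x y : Euc 2) : |(x 0 + x 1) - (y 0 + y 1)| ≤ 2 * ‖x - y‖ := by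
  have h : ∀ i, |x i - y i| ≤ ‖x - y‖ := fun i => by
    simpa using PiLp.norm_apply_le (x - y) i
  calc |(x 0 + x 1) - (y 0 + y 1)| = |(x 0 - y 0) + (x 1 - y 1)| := by ring_nf
    _ ≤ |x 0 - y 0| + |x 1 - y 1| := abs_add_le _ _
    _ ≤ 2 * ‖x - y‖ := by linarith [h 0, h 1]

def rampSeq (n : ℕ) (x : Euc 2) : ℝ := max (min (2 - 2 * n * (x 0 + x 1)) 1) 0

lemma continuous_rampSeq (n : ℕ) : Continuous (rampSeq n) := by
  unfold rampSeq; fun_prop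

lemma abs_rampSeq_le_one (n : ℕ) (x : Euc 2) : |rampSeq n x| ≤ 1 := by
  rw [abs_of_nonneg (le_max_right _ _)]
  exact max_le (min_le_right _ _) zero_le_one

lemma rampSeq_of_le {n : ℕ} (hn : 0 < n) {x : Euc 2} (hx : x 0 + x 1 ≤ 1 / (2 * n)) :
    rampSeq n x = 1 := by
  have : 2 * n * (x 0 + x 1) ≤ 1 := by
    rwa [le_div_iff₀' (by positivity)] at hx
  rw [rampSeq, min_eq_right (by linarith), max_eq_left zero_le_one]

lemma rampSeq_of_ge {n : ℕ} (hn : 0 < n) {x : Euc 2} (hx : 1 / n ≤ x 0 + x 1) :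
    rampSeq n x = 0 := by
  have : 2 ≤ 2 * n * (x 0 + x 1) := by
    rw [div_le_iff₀' (by positivity)] at hx; linarith
  rw [rampSeq, min_eq_left (by linarith), max_eq_right (by linarith)]

lemma abs_rampSeq_sub_le (n : ℕ) (x y : Euc 2) :
    |rampSeq n x - rampSeq n y| ≤ 4 * n * ‖x - y‖ := by
  calc |rampSeq n x - rampSeq n y|
      ≤ |min (2 - 2 * n * (x 0 + x 1)) 1 - min (2 - 2 * n * (y 0 + y 1)) 1| :=
        abs_max_sub_max_le_abs _ _ _
    _ ≤ |(2 - 2 * n * (x 0 + x 1)) - (2 - 2 * n * (y 0 + y 1))| := by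
        simpa using abs_min_sub_min_le_max (2 - 2 * n * (x 0 + x 1)) 1 (2 - 2 * n * (y 0 + y 1)) 1
    _ = 2 * n * |(x 0 + x 1) - (y 0 + y 1)| := by
        rw [show (2 - 2 * n * (x 0 + x 1)) - (2 - 2 * n * (y 0 + y 1))
          = 2 * n * ((y 0 + y 1) - (x 0 + x 1)) by ring, abs_mul, abs_of_nonneg (by positivity),
          abs_sub_comm]
    _ ≤ 2 * n * (2 * ‖x - y‖) := by gcongr; exact abs_coordSum_sub_le x y
    _ = 4 * n * ‖x - y‖ := by ring

lemma memLp_rampSeq (n : ℕ) : MemLp (rampSeq n) 2 (volume.restrict unitSq) := by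
  have : IsFiniteMeasure (volume.restrict unitSq) :=
    isFiniteMeasure_restrict.2 (by simp [volume_unitSq])
  exact MemLp.of_bound (continuous_rampSeq n).aestronglyMeasurable 1
    (ae_of_all _ fun x => abs_rampSeq_le_one n x)

theorem infDist_frontier_le_dist {E : Type*} [NormedAddCommGroup E] [NormedSpace ℝ E]
    [FiniteDimensional ℝ E] {s : Set E} {x z : E} (hx : x ∈ s) (hz : z ∉ s) :
    infDist x (frontier s) ≤ dist x z := by
  obtain ⟨y, hy, hxy⟩ :=
    exists_mem_frontier_infDist_compl_eq_dist hx ((ne_univ_iff_exists_notMem s).2 ⟨z, hz⟩)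
  calc infDist x (frontier s) ≤ dist x y := infDist_le_dist_of_mem hy
    _ = infDist x sᶜ := hxy.symm
    _ ≤ dist x z := infDist_le_dist_of_mem hz

lemma infDist_frontier_unitSq_le {x : Euc 2} (hx : x ∈ unitSq) (i : Fin 2) :
    infDist x (frontier unitSq) ≤ x i := by
  have hz : x - EuclideanSpace.single i (x i) ∉ unitSq := by
    fin_cases i <;> simp [unitSq]
  calc infDist x (frontier unitSq) ≤ dist x (x - EuclideanSpace.single i (x i)) :=
        infDist_frontier_le_dist hx hz
    _ = x i := by
        rw [dist_self_sub_right, PiLp.norm_single, Real.norm_eq_abs, abs_of_pos]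
        fin_cases i
        exacts [hx.1.1, hx.2.1]

lemma setLIntegral_ball_rampSeq_le (n : ℕ) (x : Euc 2) (r : ℝ) :
    ∫⁻ y in ball x r, ENNReal.ofReal ((rampSeq n y - rampSeq n x) ^ 2 * (‖x - y‖ ^ 2)⁻¹)
      ≤ ENNReal.ofReal (16 * n ^ 2) * volume (ball x r) := by
  rw [← setLIntegral_const]
  refine setLIntegral_mono' measurableSet_ball fun y _ => ENNReal.ofReal_le_ofReal ?_
  have hsq : (rampSeq n y - rampSeq n x) ^ 2 ≤ 16 * n ^ 2 * ‖x - y‖ ^ 2 := by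
    have h := abs_rampSeq_sub_le n y x
    rw [norm_sub_rev] at h
    nlinarith [abs_nonneg (rampSeq n y - rampSeq n x), sq_abs (rampSeq n y - rampSeq n x)]
  calc (rampSeq n y - rampSeq n x) ^ 2 * (‖x - y‖ ^ 2)⁻¹
      ≤ 16 * n ^ 2 * ‖x - y‖ ^ 2 * (‖x - y‖ ^ 2)⁻¹ := by gcongr
    _ ≤ 16 * (n : ℝ) ^ 2 := by
        rw [mul_assoc]
        exact mul_le_of_le_one_right (by positivity) mul_inv_le_one

lemma setLIntegral_ball_rampSeq_eq_zero {n : ℕ} (hn : 0 < n) {x : Euc 2} (hx : x ∈ unitSq)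
    (hxQ : x ∉ coordBox 0 (1 / n) 0 (1 / n)) :
    ∫⁻ y in ball x (infDist x (frontier unitSq) / 2),
      ENNReal.ofReal ((rampSeq n y - rampSeq n x) ^ 2 * (‖x - y‖ ^ 2)⁻¹) = 0 := by
  set δ := infDist x (frontier unitSq)
  have hδ0 : δ ≤ x 0 := infDist_frontier_unitSq_le hx 0
  have hδ1 : δ ≤ x 1 := infDist_frontier_unitSq_le hx 1
  have hfar : 1 / n + δ ≤ x 0 + x 1 := by
    simp only [mem_coordBox, mem_Ioo, not_and_or, not_lt] at hxQ
    rcases hxQ with (h | h) | (h | h) <;> linarith [hx.1.1, hx.2.1]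
  refine setLIntegral_eq_zero measurableSet_ball fun y hy => ?_
  have hy : 2 * ‖x - y‖ < δ := by
    rw [mem_ball, dist_eq_norm, norm_sub_rev] at hy; linarith
  have hsum := abs_le.1 ((abs_coordSum_sub_le x y).trans hy.le)
  rw [rampSeq_of_ge hn (by linarith), rampSeq_of_ge hn (by linarith)]
  simp

lemma restrictedForm_rampSeq_le {n : ℕ} (hn : 0 < n) :
    ∫⁻ x in unitSq, ∫⁻ y in ball x (infDist x (frontier unitSq) / 2),
        ENNReal.ofReal ((rampSeq n y - rampSeq n x) ^ 2 * (‖x - y‖ ^ 2)⁻¹)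
      ≤ ENNReal.ofReal (16 / n ^ 2) := by
  set Q := coordBox 0 (1 / n) 0 (1 / n)
  have inner : ∀ x ∈ unitSq, ∫⁻ y in ball x (infDist x (frontier unitSq) / 2),
      ENNReal.ofReal ((rampSeq n y - rampSeq n x) ^ 2 * (‖x - y‖ ^ 2)⁻¹)
        ≤ Q.indicator (fun _ => ENNReal.ofReal 16) x := by
    intro x hx
    by_cases hxQ : x ∈ Q
    · rw [indicator_of_mem hxQ]
      refine (setLIntegral_ball_rampSeq_le n x _).trans ?_
      set δ := infDist x (frontier unitSq)
      have hδ : 0 ≤ δ := infDist_nonneg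
      have hδn : n * δ ≤ 1 := by
        have h := (infDist_frontier_unitSq_le hx 0).trans (mem_coordBox.1 hxQ).1.2.le
        rwa [le_div_iff₀' (by positivity)] at h
      rw [EuclideanSpace.volume_ball_fin_two, ← ENNReal.ofReal_pow (by positivity),
        ← ENNReal.ofReal_mul (by positivity), ← ENNReal.ofReal_mul (by positivity)]
      refine ENNReal.ofReal_le_ofReal ?_
      have h2 : (n * δ) ^ 2 ≤ 1 := by nlinarith [mul_nonneg (Nat.cast_nonneg n) hδ]
      nlinarith [Real.pi_lt_four, mul_le_mul_of_nonneg_right h2 Real.pi_pos.le]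
    · rw [indicator_of_notMem hxQ, setLIntegral_ball_rampSeq_eq_zero hn hx hxQ]
  calc _ ≤ ∫⁻ x in unitSq, Q.indicator (fun _ => ENNReal.ofReal 16) x :=
        setLIntegral_mono' measurableSet_unitSq inner
    _ ≤ ∫⁻ x, Q.indicator (fun _ => ENNReal.ofReal 16) x := setLIntegral_le_lintegral _ _
    _ = ENNReal.ofReal (16 / n ^ 2) := by
        rw [lintegral_indicator_const (measurableSet_coordBox _ _ _ _), volume_coordBox, sub_zero,
          ← ENNReal.ofReal_mul (by positivity), ← ENNReal.ofReal_mul (by positivity)]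
        congr 1; field_simp

/-- lower bound in Example `ex:counter-weak-kernels`:
`E^cen(u_n) = 2 ∫_{A_n} ∫_{D∖A_n} |x-y|⁻² dy dx ≥ c (log n)/n²`, and consequently no
constant `c₁` can dominate `E^cen` by the form restricted to the balls `B(x, δ_D(x)/2)`. -/
theorem stmt13 :
    (∃ c : ℝ, 0 < c ∧ ∀ n : ℕ, 2 ≤ n →
      Ecen unitSq kWeak (uSeq n)
          = 2 * ∫⁻ x in ASeq n, ∫⁻ y in unitSq \ ASeq n,
              ENNReal.ofReal ((‖x - y‖ ^ 2)⁻¹) ∧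
      ENNReal.ofReal (c * Real.log n / n ^ 2) ≤ Ecen unitSq kWeak (uSeq n)) ∧
    ¬ ∃ c₁ : ℝ, 0 ≤ c₁ ∧ ∀ u : Euc 2 → ℝ, MemLp u 2 (volume.restrict unitSq) →
      Ecen unitSq kWeak u
        ≤ ENNReal.ofReal c₁ *
          ∫⁻ x in unitSq, ∫⁻ y in Metric.ball x (Metric.infDist x (frontier unitSq) / 2),
            ENNReal.ofReal ((u y - u x) ^ 2 * (‖x - y‖ ^ 2)⁻¹) := by
  refine ⟨⟨1 / 64, by norm_num, fun n hn => ⟨Ecen_uSeq n, ?_⟩⟩, ?_⟩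
  · refine Ecen_unitSq_ge_log_div_sq _ hn (fun x _ hx => if_pos (hx.trans_le ?_))
      fun y _ hy => if_neg hy.not_gt
    gcongr; linarith
  · rintro ⟨c₁, hc₁, hc⟩
    have hlog : ∀ n : ℕ, 2 ≤ n → Real.log n ≤ 1024 * c₁ := fun n hn => by
      have lower := Ecen_unitSq_ge_log_div_sq (rampSeq n) hn
        (fun x _ hx => rampSeq_of_le (by omega) hx.le) fun y _ hy => rampSeq_of_ge (by omega) hy
      have upper := (hc _ (memLp_rampSeq n)).trans
        (mul_le_mul_right (restrictedForm_rampSeq_le (by omega)) _)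
      have h := lower.trans upper
      rw [← ENNReal.ofReal_mul hc₁, ENNReal.ofReal_le_ofReal_iff (by positivity)] at h
      field_simp at h
      linarith
    obtain ⟨n, hn2, hn⟩ := ((eventually_ge_atTop 2).and ((Real.tendsto_log_atTop.comp
      tendsto_natCast_atTop_atTop).eventually_gt_atTop (1024 * c₁))).exists
    exact (hlog n hn2).not_gt hn

end
end

section
/- Let C ⊆ ℝ^d be a bounded measurable set of positive Lebesgue measure with |C| ≥ κ · diam(C)^d for some κ > 0, let ℓ : (0,∞) → (0,∞) be non-increasing, and let p ≥ 1. Then for every u ∈ L^p(C): ∫_C |u(x) − u_C|^p dx ≤ κ⁻¹ ℓ(diam(C))⁻¹ ∫_C ∫_C |u(x) − u(y)|^p · ℓ(|x−y|)/|x−y|^d dy dx, where u_C := |C|⁻¹ ∫_C u. -/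
/-!
Jensen's inequality for the convex function `|·| ^ p` gives
`|u x - u_C| ^ p ≤ |C|⁻¹ ∫_C |u x - u y| ^ p dy`. For distinct `x, y ∈ C` we have
`0 < ‖x - y‖ ≤ diam C`, so monotonicity of `ℓ` makes
`diam C ^ d ℓ ‖x - y‖ / (ℓ (diam C) ‖x - y‖ ^ d) ≥ 1`; inserting this factor and using
`|C| ≥ κ diam C ^ d` yields the constant `κ⁻¹ ℓ (diam C)⁻¹`.
-/

open MeasureTheory Metric Set ENNReal Filter

noncomputable section

theorem convexOn_abs_rpow {p : ℝ} (hp : 1 ≤ p) : ConvexOn ℝ univ fun t : ℝ => |t| ^ p := by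
  have himage : (abs '' univ : Set ℝ) = Ici 0 :=
    Set.ext fun t => ⟨by rintro ⟨s, -, rfl⟩; exact abs_nonneg s,
      fun ht => ⟨t, trivial, abs_of_nonneg ht⟩⟩
  refine ConvexOn.comp (g := fun x : ℝ => x ^ p) ?_ (convexOn_univ_norm (E := ℝ)) ?_
  · exact himage ▸ convexOn_rpow hp
  · exact himage ▸ Real.monotoneOn_rpow_Ici_of_exponent_nonneg (by linarith)

section Average

variable {α : Type*} [MeasurableSpace α] {μ : Measure α} [IsFiniteMeasure μ]

theorem MeasureTheory.MemLp.integrable_abs_const_sub_rpow {p : ℝ} (hp : 0 < p) {u : α → ℝ}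
    (hu : MemLp u (ENNReal.ofReal p) μ) (c : ℝ) : Integrable (fun x => |c - u x| ^ p) μ := by
  simpa [ENNReal.toReal_ofReal hp.le, Real.norm_eq_abs] using
    ((memLp_const c).sub hu).integrable_norm_rpow (ENNReal.ofReal_pos.2 hp).ne'
      ENNReal.ofReal_ne_top

variable [NeZero μ]

theorem average_const_sub {f : α → ℝ} (hf : Integrable f μ) (c : ℝ) :
    ⨍ x, (c - f x) ∂μ = c - ⨍ x, f x ∂μ := by
  simp only [average_eq, integral_sub (integrable_const c) hf, integral_const, smul_eq_mul, mul_sub,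
    inv_mul_cancel_left₀ measureReal_univ_ne_zero]

theorem abs_sub_average_rpow_le {p : ℝ} (hp : 1 ≤ p) {u : α → ℝ}
    (hu : MemLp u (ENNReal.ofReal p) μ) (c : ℝ) :
    |c - ⨍ x, u x ∂μ| ^ p ≤ ⨍ x, |c - u x| ^ p ∂μ := by
  have hcu : MemLp (fun x => c - u x) (ENNReal.ofReal p) μ := (memLp_const c).sub hu
  have hp1 : 1 ≤ ENNReal.ofReal p := ENNReal.one_le_ofReal.2 hp
  rw [← average_const_sub (hu.integrable hp1)]
  exact (convexOn_abs_rpow hp).map_average_le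
    (continuous_abs.rpow_const fun _ => Or.inr (zero_le_one.trans hp)).continuousOn
    isClosed_univ (ae_of_all _ fun _ => mem_univ _) (hcu.integrable hp1)
    (hu.integrable_abs_const_sub_rpow (zero_lt_one.trans_le hp) c)

theorem lintegral_abs_sub_average_rpow_le {p : ℝ} (hp : 1 ≤ p) {u : α → ℝ}
    (hu : MemLp u (ENNReal.ofReal p) μ) :
    ∫⁻ x, ENNReal.ofReal (|u x - ⨍ y, u y ∂μ| ^ p) ∂μ
      ≤ (μ univ)⁻¹ * ∫⁻ x, ∫⁻ y, ENNReal.ofReal (|u x - u y| ^ p) ∂μ ∂μ := by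
  rw [← lintegral_const_mul' _ _ (inv_ne_top.2 (Measure.measure_univ_ne_zero.2 (NeZero.ne μ)))]
  refine lintegral_mono fun x => ?_
  calc ENNReal.ofReal (|u x - ⨍ y, u y ∂μ| ^ p)
      ≤ ENNReal.ofReal (⨍ y, |u x - u y| ^ p ∂μ) :=
        ENNReal.ofReal_le_ofReal (abs_sub_average_rpow_le hp hu (u x))
    _ = (μ univ)⁻¹ * ∫⁻ y, ENNReal.ofReal (|u x - u y| ^ p) ∂μ := by
        rw [ofReal_average (hu.integrable_abs_const_sub_rpow (zero_lt_one.trans_le hp) (u x))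
          (ae_of_all _ fun _ => by positivity), ENNReal.div_eq_inv_mul]

end Average

section Kernel

variable {E : Type*} [NormedAddCommGroup E] {C : Set E} {ℓ : ℝ → ℝ}

theorem le_diam_pow_mul_kernel (hC : Bornology.IsBounded C) (hℓpos : ∀ r > (0:ℝ), 0 < ℓ r)
    (hℓmono : AntitoneOn ℓ (Ioi 0)) (d : ℕ) {a : ℝ} (ha : 0 ≤ a) {x y : E} (hx : x ∈ C)
    (hy : y ∈ C) (hxy : x ≠ y) :
    a ≤ diam C ^ d * (ℓ (diam C))⁻¹ * (a * ℓ ‖x - y‖ / ‖x - y‖ ^ d) := by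
  have hr : 0 < ‖x - y‖ := norm_sub_pos_iff.2 hxy
  have hrD : ‖x - y‖ ≤ diam C := dist_eq_norm x y ▸ dist_le_diam_of_mem hC hx hy
  have hD : 0 < diam C := hr.trans_le hrD
  have hℓD := hℓpos _ hD
  have hℓ : ℓ (diam C) * ‖x - y‖ ^ d ≤ ℓ ‖x - y‖ * diam C ^ d :=
    mul_le_mul (hℓmono hr hD hrD) (pow_le_pow_left₀ hr.le hrD d) (by positivity)
      (hℓpos _ hr).le
  calc a = a * (ℓ (diam C) * ‖x - y‖ ^ d) / (ℓ (diam C) * ‖x - y‖ ^ d) := by field_simp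
    _ ≤ a * (ℓ ‖x - y‖ * diam C ^ d) / (ℓ (diam C) * ‖x - y‖ ^ d) := by gcongr
    _ = _ := by field_simp

variable [MeasurableSpace E]

theorem setLIntegral_setLIntegral_le_diam_pow_mul_kernel (μ : Measure E) (hCm : MeasurableSet C)
    (hC : Bornology.IsBounded C) (hℓpos : ∀ r > (0:ℝ), 0 < ℓ r) (hℓmono : AntitoneOn ℓ (Ioi 0))
    (d : ℕ) {g : E → E → ℝ} (hg : ∀ x y, 0 ≤ g x y) (hg_diag : ∀ x, g x x = 0) :
    ∫⁻ x in C, ∫⁻ y in C, ENNReal.ofReal (g x y) ∂μ ∂μ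
      ≤ ENNReal.ofReal (diam C ^ d * (ℓ (diam C))⁻¹) *
        ∫⁻ x in C, ∫⁻ y in C, ENNReal.ofReal (g x y * ℓ ‖x - y‖ / ‖x - y‖ ^ d) ∂μ ∂μ := by
  rw [← lintegral_const_mul' _ _ ofReal_ne_top]
  refine setLIntegral_mono' hCm fun x hx => ?_
  rw [← lintegral_const_mul' _ _ ofReal_ne_top]
  refine setLIntegral_mono' hCm fun y hy => ?_
  obtain rfl | hxy := eq_or_ne x y
  · simp [hg_diag]
  have hℓ := hℓpos _ (norm_sub_pos_iff.2 hxy)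
  rw [← ENNReal.ofReal_mul' (by have := hg x y; positivity)]
  exact ENNReal.ofReal_le_ofReal (le_diam_pow_mul_kernel hC hℓpos hℓmono d (hg x y) hx hy hxy)

end Kernel

theorem inv_mul_ofReal_le_ofReal_inv_mul {V : ℝ≥0∞} {κ t L : ℝ} (hκ : 0 < κ) (ht : 0 ≤ t)
    (hV : ENNReal.ofReal (κ * t) ≤ V) :
    V⁻¹ * ENNReal.ofReal (t * L⁻¹) ≤ ENNReal.ofReal (κ⁻¹ * L⁻¹) := by
  rcases le_or_gt L 0 with hL | hL
  · simp [ENNReal.ofReal_eq_zero.2 (mul_nonpos_of_nonneg_of_nonpos ht (inv_nonpos.2 hL))]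
  obtain rfl | ht := ht.eq_or_lt
  · simp
  calc V⁻¹ * ENNReal.ofReal (t * L⁻¹)
      ≤ ENNReal.ofReal (κ * t)⁻¹ * ENNReal.ofReal (t * L⁻¹) := by
        rw [ENNReal.ofReal_inv_of_pos (by positivity)]
        gcongr
    _ = ENNReal.ofReal (κ⁻¹ * L⁻¹) := by
        rw [← ENNReal.ofReal_mul (by positivity)]
        congr 1
        field_simp

/-- elementary Poincaré inequality used in the proof of Theorem
`thm:poincare-nonlocal`: for a bounded measurable set `C` of positive measure with
`|C| ≥ κ diam(C)^d` and a non-increasing `ℓ : (0,∞) → (0,∞)`,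
`∫_C |u - u_C|^p ≤ κ⁻¹ ℓ(diam C)⁻¹ ∫_C ∫_C |u(x) - u(y)|^p ℓ(|x-y|)/|x-y|^d dy dx`. -/
theorem stmt17 {d : ℕ} (C : Set (Euc d)) (hCmeas : MeasurableSet C)
    (hCbd : Bornology.IsBounded C) (hCpos : 0 < volume C)
    (κ : ℝ) (hκ : 0 < κ)
    (hvol : ENNReal.ofReal (κ * Metric.diam C ^ d) ≤ volume C)
    (ℓ : ℝ → ℝ) (hℓpos : ∀ r > (0:ℝ), 0 < ℓ r) (hℓmono : AntitoneOn ℓ (Set.Ioi 0))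
    (p : ℝ) (hp : 1 ≤ p)
    (u : Euc d → ℝ) (hu : MemLp u (ENNReal.ofReal p) (volume.restrict C)) :
    (∫⁻ x in C, ENNReal.ofReal (|u x - ⨍ y in C, u y| ^ p))
      ≤ ENNReal.ofReal (κ⁻¹ * (ℓ (Metric.diam C))⁻¹) *
        ∫⁻ x in C, ∫⁻ y in C,
          ENNReal.ofReal (|u x - u y| ^ p * ℓ ‖x - y‖ / ‖x - y‖ ^ d) := by
  have : IsFiniteMeasure (volume.restrict C) := isFiniteMeasure_restrict.2 hCbd.measure_lt_top.ne
  have : NeZero (volume.restrict C) := ⟨by simpa using hCpos.ne'⟩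
  calc (∫⁻ x in C, ENNReal.ofReal (|u x - ⨍ y in C, u y| ^ p))
      ≤ (volume C)⁻¹ * ∫⁻ x in C, ∫⁻ y in C, ENNReal.ofReal (|u x - u y| ^ p) := by
        simpa using lintegral_abs_sub_average_rpow_le hp hu
    _ ≤ (volume C)⁻¹ * (ENNReal.ofReal (diam C ^ d * (ℓ (diam C))⁻¹) *
          ∫⁻ x in C, ∫⁻ y in C, ENNReal.ofReal (|u x - u y| ^ p * ℓ ‖x - y‖ / ‖x - y‖ ^ d)) := by
        gcongr
        exact setLIntegral_setLIntegral_le_diam_pow_mul_kernel volume hCmeas hCbd hℓpos hℓmono d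
          (fun _ _ => by positivity) (fun _ => by simp [Real.zero_rpow (by linarith : p ≠ 0)])
    _ ≤ _ := by
        rw [← mul_assoc]
        gcongr
        exact inv_mul_ofReal_le_ofReal_inv_mul hκ (by positivity) hvol

end
end
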